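/- Fix S ⊆ {2,…,p} of cardinality s = s(n) and λ♯ = λ♯(n) > 0. Suppose z_{-S} ∈ ℝ^{p−1} is supported outside S with ‖z_{-S}‖_∞ ≤ 1 and satisfies the reversed irrepresentable condition ‖Σ_{S,-S}Σ_{-S,-S}^{-1}z_{-S}‖_∞ ≤ 1, and suppose 1 − λ♯²‖Σ_{-1,-1}^{-1/2}z_{-S}‖₂² ≫ 0 and λ♯²‖Σ_{-1,-1}^{-1/2}z_{-S}‖₂² ≫ 0. Let γ⁰_S (supported on S) satisfy 1 − λ♯²‖Σ_{-1,-1}^{-1/2}z_{-S}‖₂² − ‖Σ_{-1,-1}^{1/2}γ⁰_S‖₂² ≫ 0, define γ⁰_{-S} := λ♯ Σ_{-S,-S}^{-1} z_{-S} (extended by zero on S), γ⁰ := γ⁰_S + γ⁰_{-S}, and γ♯ := γ⁰_S. If λ♯√s → 0 as n → ∞, then (γ♯, λ♯) is an eligible pair relative to γ⁰, γ⁰ is allowed for all sufficiently large n, λ♯‖γ⁰‖₁ does not tend to 0, and in fact ‖Σ_{-1,-1}^{1/2}(γ⁰ − γ♯)‖₂² ≫ 0. -/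

import Mathlib

open Filter Matrix

noncomputable section

/-- The bordered matrix `Σ(γ⁰) = [[1, (Σ_{-1,-1}γ⁰)ᵀ], [Σ_{-1,-1}γ⁰, Σ_{-1,-1}]]`. -/
noncomputable def bordered {q : ℕ} (A : Matrix (Fin q) (Fin q) ℝ) (γ : Fin q → ℝ) :
    Matrix (Fin (q + 1)) (Fin (q + 1)) ℝ :=
  Matrix.of
    (Fin.cons (Fin.cons 1 (A *ᵥ γ) : Fin (q + 1) → ℝ)
      (fun i : Fin q => (Fin.cons ((A *ᵥ γ) i) (A i) : Fin (q + 1) → ℝ)))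

/-! ### Auxiliary lemmas -/

lemma dot_symm {q : ℕ} {A : Matrix (Fin q) (Fin q) ℝ} (hA : A.IsSymm)
    (x y : Fin q → ℝ) : x ⬝ᵥ (A *ᵥ y) = y ⬝ᵥ (A *ᵥ x) := by
  simp only [dotProduct, Matrix.mulVec, Finset.mul_sum]
  rw [Finset.sum_comm]
  refine Finset.sum_congr rfl fun i _ => Finset.sum_congr rfl fun j _ => ?_
  rw [hA.apply]
  ring

lemma quad_nonneg {q : ℕ} {A : Matrix (Fin q) (Fin q) ℝ} (hA : A.PosSemidef)
    (x : Fin q → ℝ) : 0 ≤ x ⬝ᵥ (A *ᵥ x) := by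
  simpa using hA.dotProduct_mulVec_nonneg x

lemma quad_lower {q : ℕ} {A : Matrix (Fin q) (Fin q) ℝ} (hA : A.IsHermitian)
    {c : ℝ} (hc : ∀ i, c ≤ hA.eigenvalues i) (x : Fin q → ℝ) :
    c * (x ⬝ᵥ x) ≤ x ⬝ᵥ (A *ᵥ x) := by
  set U : Matrix (Fin q) (Fin q) ℝ := (hA.eigenvectorUnitary : Matrix (Fin q) (Fin q) ℝ) with hU
  set D : Matrix (Fin q) (Fin q) ℝ := diagonal (RCLike.ofReal ∘ hA.eigenvalues) with hD
  have hstar : star U = Uᵀ := by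
    rw [Matrix.star_eq_conjTranspose, Matrix.conjTranspose_eq_transpose_of_trivial]
  set y : Fin q → ℝ := Uᵀ *ᵥ x with hy
  have hUU : U * Uᵀ = 1 := by
    have := Matrix.mem_unitaryGroup_iff.mp hA.eigenvectorUnitary.2
    rwa [hstar] at this
  have hyy : y ⬝ᵥ y = x ⬝ᵥ x := by
    rw [hy, Matrix.dotProduct_mulVec, Matrix.vecMul_transpose, Matrix.mulVec_mulVec, hUU,
      Matrix.one_mulVec]
  have key : A *ᵥ x = U *ᵥ (D *ᵥ y) := by
    conv_lhs => rw [hA.spectral_theorem, Unitary.conjStarAlgAut_apply, hstar]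
    rw [← hD, ← hU, Matrix.mulVec_mulVec, Matrix.mulVec_mulVec]
  have hAq : x ⬝ᵥ (A *ᵥ x) = ∑ i, hA.eigenvalues i * (y i)^2 := by
    rw [key, Matrix.dotProduct_mulVec, ← Matrix.mulVec_transpose, ← hy]
    simp only [dotProduct, Matrix.mulVec_diagonal, hD]
    refine Finset.sum_congr rfl fun i _ => ?_
    simp
    ring
  rw [hAq, ← hyy]
  have h2 : c * (y ⬝ᵥ y) = ∑ i, c * (y i)^2 := by
    simp [dotProduct, Finset.mul_sum, pow_two]
  rw [h2]
  exact Finset.sum_le_sum fun i _ => mul_le_mul_of_nonneg_right (hc i) (sq_nonneg _)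

/-- Cauchy-Schwarz for a positive semidefinite symmetric form. -/
lemma quad_cs {q : ℕ} {A : Matrix (Fin q) (Fin q) ℝ} (hA : A.PosSemidef) (hS : A.IsSymm)
    (x y : Fin q → ℝ) :
    (x ⬝ᵥ (A *ᵥ y))^2 ≤ (x ⬝ᵥ (A *ᵥ x)) * (y ⬝ᵥ (A *ᵥ y)) := by
  have h : ∀ t : ℝ, 0 ≤ (y ⬝ᵥ (A *ᵥ y)) * (t*t) + (2 * (x ⬝ᵥ (A *ᵥ y))) * t + x ⬝ᵥ (A *ᵥ x) := by
    intro t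
    have h0 := quad_nonneg hA (x + t • y)
    have e1 : (x + t • y) ⬝ᵥ (A *ᵥ (x + t • y)) =
        (y ⬝ᵥ (A *ᵥ y)) * (t*t) + (2 * (x ⬝ᵥ (A *ᵥ y))) * t + x ⬝ᵥ (A *ᵥ x) := by
      rw [Matrix.mulVec_add, Matrix.mulVec_smul, dotProduct_add, add_dotProduct,
        add_dotProduct, dotProduct_smul, smul_dotProduct,
        smul_dotProduct, dotProduct_smul, dot_symm hS y x]
      simp only [smul_eq_mul]
      ring
    rw [e1] at h0
    exact h0
  have hd := discrim_le_zero h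
  rw [discrim] at hd
  nlinarith [hd]

lemma quad_inv_upper {q : ℕ} {A : Matrix (Fin q) (Fin q) ℝ} (hA : A.PosDef)
    {c : ℝ} (hc : 0 < c) (hlow : ∀ x : Fin q → ℝ, c * (x ⬝ᵥ x) ≤ x ⬝ᵥ (A *ᵥ x))
    (x : Fin q → ℝ) : x ⬝ᵥ (A⁻¹ *ᵥ x) ≤ (x ⬝ᵥ x) / c := by
  set u : Fin q → ℝ := A⁻¹ *ᵥ x with hu
  have hAu : A *ᵥ u = x := by
    rw [hu, Matrix.mulVec_mulVec, Matrix.mul_nonsing_inv _ hA.det_pos.ne'.isUnit,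
      Matrix.one_mulVec]
  have ht : x ⬝ᵥ (A⁻¹ *ᵥ x) = x ⬝ᵥ u := rfl
  set t : ℝ := x ⬝ᵥ u with htdef
  have htu : t = u ⬝ᵥ (A *ᵥ u) := by rw [htdef, ← hAu, dotProduct_comm]
  have huu : c * (u ⬝ᵥ u) ≤ t := htu ▸ hlow u
  have hu0 : 0 ≤ u ⬝ᵥ u := by
    simpa [dotProduct] using Finset.sum_nonneg fun i _ => mul_self_nonneg (u i)
  have hx0 : 0 ≤ x ⬝ᵥ x := by
    simpa [dotProduct] using Finset.sum_nonneg fun i _ => mul_self_nonneg (x i)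
  have ht0 : 0 ≤ t := le_trans (by positivity) huu
  have hcs : t^2 ≤ (x ⬝ᵥ x) * (u ⬝ᵥ u) := by
    have := Finset.sum_mul_sq_le_sq_mul_sq Finset.univ x u
    simpa [dotProduct, pow_two, htdef] using this
  rw [le_div_iff₀ hc]
  rcases eq_or_lt_of_le ht0 with h|h
  · rw [← h, zero_mul]; exact hx0
  · nlinarith [hcs, huu, hx0, hu0, mul_le_mul_of_nonneg_left huu hx0,
      mul_le_mul_of_nonneg_left hcs hc.le]

/-- Sum over all indices equals the sum over a subtype when `f` vanishes off it. -/
lemma sum_eq_sum_subtype {q : ℕ} (p : Fin q → Prop) [DecidablePred p] (f : Fin q → ℝ)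
    (h0 : ∀ j, ¬ p j → f j = 0) :
    ∑ j, f j = ∑ j : {j : Fin q // p j}, f j.val := by
  classical
  rw [← Finset.sum_subset (Finset.subset_univ (Finset.univ.filter p))
    (fun x _ hx => h0 x (by simpa using hx))]
  rw [Finset.sum_subtype (p := p) (Finset.univ.filter p) (fun x => by simp) f]

/-- A principal submatrix (indexed by a subtype) of a positive definite matrix is
positive definite. -/
lemma posdef_submatrix {q : ℕ} {A : Matrix (Fin q) (Fin q) ℝ} (hA : A.PosDef)
    (p : Fin q → Prop) [DecidablePred p] :
    (A.submatrix (Subtype.val : {j : Fin q // p j} → Fin q)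
      (Subtype.val : {j : Fin q // p j} → Fin q)).PosDef := by
  classical
  refine Matrix.PosDef.of_dotProduct_mulVec_pos ?_ ?_
  · have h := hA.1
    ext i j
    simp only [Matrix.conjTranspose_apply, Matrix.submatrix_apply]
    have := congrFun (congrFun h j.val) i.val
    simpa [Matrix.conjTranspose_apply] using this.symm
  · intro x hx
    set xe : Fin q → ℝ := fun j => if h : p j then x ⟨j, h⟩ else 0 with hxe
    have hxe0 : xe ≠ 0 := by
      intro hcontra
      apply hx
      ext i
      have := congrFun hcontra i.val
      simpa [hxe, i.prop] using this
    have hxev : ∀ i : {j : Fin q // p j}, xe i.val = x i := by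
      intro i; simp [hxe, i.prop]
    have hsum : x ⬝ᵥ ((A.submatrix (Subtype.val : {j : Fin q // p j} → Fin q)
        (Subtype.val : {j : Fin q // p j} → Fin q)) *ᵥ x) = xe ⬝ᵥ (A *ᵥ xe) := by
      simp only [dotProduct, Matrix.mulVec, Matrix.submatrix_apply]
      rw [sum_eq_sum_subtype p (fun j => xe j * ∑ l, A j l * xe l)
        (fun j hj => by simp [hxe, hj])]
      refine Finset.sum_congr rfl fun i _ => ?_
      rw [hxev i]
      congr 1
      rw [sum_eq_sum_subtype p (fun l => A i.val l * xe l)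
        (fun l hl => by simp [hxe, hl])]
      exact Finset.sum_congr rfl fun l _ => by rw [hxev l]
    have := hA.dotProduct_mulVec_pos hxe0
    simp only [star_trivial] at this ⊢
    rw [hsum]
    exact this

lemma core {q : ℕ} {A : Matrix (Fin q) (Fin q) ℝ} (hA : A.PosDef)
    (S : Finset (Fin q)) (lam : ℝ) (z w : Fin q → ℝ)
    (hw0 : ∀ j ∈ S, w j = 0)
    (hw : ∀ j, ∀ h : j ∉ S, w j = lam *
      ((((A.submatrix (Subtype.val : {j : Fin q // j ∉ S} → Fin q)
          (Subtype.val : {j : Fin q // j ∉ S} → Fin q))⁻¹) *ᵥ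
        (fun l : {j : Fin q // j ∉ S} => z l.val)) ⟨j, h⟩)) :
    (∀ j, ∀ _ : j ∉ S, (A *ᵥ w) j = lam * z j) ∧
    (∀ j (h : j ∈ S), (A *ᵥ w) j = lam *
      ((A.submatrix (Subtype.val : {j : Fin q // j ∈ S} → Fin q)
          (Subtype.val : {j : Fin q // j ∉ S} → Fin q) *ᵥ
        ((A.submatrix (Subtype.val : {j : Fin q // j ∉ S} → Fin q)
            (Subtype.val : {j : Fin q // j ∉ S} → Fin q))⁻¹ *ᵥ
          fun l : {j : Fin q // j ∉ S} => z l.val)) ⟨j, h⟩)) := by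
  classical
  set B := A.submatrix (Subtype.val : {j : Fin q // j ∉ S} → Fin q)
      (Subtype.val : {j : Fin q // j ∉ S} → Fin q) with hBdef
  have hB : B.PosDef := posdef_submatrix hA (fun j => j ∉ S)
  set zT : {j : Fin q // j ∉ S} → ℝ := fun l => z l.val with hzT
  set v : {j : Fin q // j ∉ S} → ℝ := B⁻¹ *ᵥ zT with hv
  have hkey : ∀ j, (A *ᵥ w) j = lam * ∑ l : {l : Fin q // l ∉ S}, A j l.val * v l := by
    intro j
    show ∑ l, A j l * w l = _
    rw [sum_eq_sum_subtype (fun l => l ∉ S) (fun l => A j l * w l)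
      (fun l hl => by show A j l * w l = 0; rw [hw0 l (not_not.mp hl), mul_zero])]
    rw [Finset.mul_sum]
    refine Finset.sum_congr rfl fun l _ => ?_
    rw [hw l.val l.prop]
    ring
  have hBv : B *ᵥ v = zT := by
    rw [hv, Matrix.mulVec_mulVec, Matrix.mul_nonsing_inv _ hB.det_pos.ne'.isUnit,
      Matrix.one_mulVec]
  constructor
  · intro j hj
    rw [hkey j]
    congr 1
    have : ∑ l : {l : Fin q // l ∉ S}, A j l.val * v l = (B *ᵥ v) ⟨j, hj⟩ := rfl
    rw [this, hBv]
  · intro j hj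
    rw [hkey j]
    rfl

lemma bordered_quad {q : ℕ} {A : Matrix (Fin q) (Fin q) ℝ} (hS : A.IsSymm)
    (γ : Fin q → ℝ) (u : Fin (q + 1) → ℝ) :
    u ⬝ᵥ (bordered A γ *ᵥ u) =
      (fun i => u i.succ + u 0 * γ i) ⬝ᵥ (A *ᵥ fun i => u i.succ + u 0 * γ i)
        + (u 0)^2 * (1 - γ ⬝ᵥ (A *ᵥ γ)) := by
  set c : ℝ := u 0 with hc
  set v : Fin q → ℝ := fun i => u i.succ with hv
  have hrow0 : (bordered A γ *ᵥ u) 0 = 1 * c + (A *ᵥ γ) ⬝ᵥ v := by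
    show ∑ j, (Fin.cons 1 (A *ᵥ γ) : Fin (q+1) → ℝ) j * u j = _
    rw [Fin.sum_univ_succ]
    simp only [Fin.cons_zero, Fin.cons_succ]
    rfl
  have hrowsucc : ∀ i : Fin q, (bordered A γ *ᵥ u) i.succ
      = (A *ᵥ γ) i * c + (A *ᵥ v) i := by
    intro i
    show ∑ j, (Fin.cons ((A *ᵥ γ) i) (A i) : Fin (q+1) → ℝ) j * u j = _
    rw [Fin.sum_univ_succ]
    simp only [Fin.cons_zero, Fin.cons_succ]
    rfl
  have hL : u ⬝ᵥ (bordered A γ *ᵥ u)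
      = c * c + 2 * c * (v ⬝ᵥ (A *ᵥ γ)) + v ⬝ᵥ (A *ᵥ v) := by
    rw [dotProduct, Fin.sum_univ_succ, hrow0]
    have : ∀ i : Fin q, u i.succ * (bordered A γ *ᵥ u) i.succ
        = c * (v i * (A *ᵥ γ) i) + v i * (A *ᵥ v) i := by
      intro i; rw [hrowsucc i]; show v i * _ = _; ring
    rw [Finset.sum_congr rfl (fun i _ => this i)]
    rw [Finset.sum_add_distrib, ← Finset.mul_sum]
    have h1 : (A *ᵥ γ) ⬝ᵥ v = v ⬝ᵥ (A *ᵥ γ) := dotProduct_comm _ _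
    have h2 : ∑ i, v i * (A *ᵥ γ) i = v ⬝ᵥ (A *ᵥ γ) := rfl
    have h3 : ∑ i, v i * (A *ᵥ v) i = v ⬝ᵥ (A *ᵥ v) := rfl
    rw [h1, h2, h3]
    ring
  have hp : (fun i => u i.succ + u 0 * γ i) = v + c • γ := by
    funext i; simp [hv, hc, smul_eq_mul]
  rw [hL, hp]
  rw [Matrix.mulVec_add, Matrix.mulVec_smul, dotProduct_add, add_dotProduct,
    add_dotProduct, dotProduct_smul, smul_dotProduct,
    smul_dotProduct, dotProduct_smul, dot_symm hS γ v]
  simp only [smul_eq_mul]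
  ring

set_option maxHeartbeats 1600000 in
/-- Lemma `reversed-irrepresentable.lemma` (a): construction of `γ⁰` from
`z_{-S}` satisfying the reversed irrepresentable condition, so that `(γ⁰_S, λ♯)` is an
eligible pair relative to `γ⁰`, `γ⁰` is allowed, `λ♯‖γ⁰‖₁ ↛ 0` and
`‖Σ_{-1,-1}^{1/2}(γ⁰-γ♯)‖₂² ≫ 0`. -/
theorem reversed_irrepresentable_construction
    (k : ℕ → ℕ) (hk : ∀ n, 1 ≤ k n)
    (A : ∀ n, Matrix (Fin (k n)) (Fin (k n)) ℝ)
    (hsymm : ∀ n, (A n).IsSymm)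
    (hpos : ∀ n, (A n).PosDef)
    (hdiag : ∀ n, ∀ i, A n i i = 1)
    (c₀ : ℝ) (hc₀ : 0 < c₀)
    (heig : ∀ n i, c₀ ≤ (hpos n).1.eigenvalues i)
    (S : ∀ n, Finset (Fin (k n)))
    (lam : ℕ → ℝ) (hlam : ∀ n, 0 < lam n)
    -- z_{-S} : supported outside S, with ‖z_{-S}‖_∞ ≤ 1
    (z : ∀ n, Fin (k n) → ℝ)
    (hzsupp : ∀ n j, j ∈ S n → z n j = 0)
    (hz : ∀ n j, |z n j| ≤ 1)
    -- the reversed irrepresentable condition ‖Σ_{S,-S} Σ_{-S,-S}^{-1} z_{-S}‖_∞ ≤ 1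
    (hric : ∀ n (i : {j : Fin (k n) // j ∈ S n}),
        |(((A n).submatrix (Subtype.val : {j : Fin (k n) // j ∈ S n} → Fin (k n))
              (Subtype.val : {j : Fin (k n) // j ∉ S n} → Fin (k n))) *ᵥ
            ((((A n).submatrix (Subtype.val : {j : Fin (k n) // j ∉ S n} → Fin (k n))
                  (Subtype.val : {j : Fin (k n) // j ∉ S n} → Fin (k n)))⁻¹) *ᵥ
              (fun l : {j : Fin (k n) // j ∉ S n} => z n l.val))) i| ≤ 1)
    -- 1 - λ♯²‖Σ_{-1,-1}^{-1/2} z_{-S}‖₂² ≫ 0 and λ♯²‖Σ_{-1,-1}^{-1/2} z_{-S}‖₂² ≫ 0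
    (hz1 : ∃ c > (0 : ℝ), ∀ᶠ n in atTop,
        c ≤ 1 - lam n ^ 2 * (z n ⬝ᵥ ((A n)⁻¹ *ᵥ z n)))
    (hz2 : ∃ c > (0 : ℝ), ∀ᶠ n in atTop,
        c ≤ lam n ^ 2 * (z n ⬝ᵥ ((A n)⁻¹ *ᵥ z n)))
    -- γ⁰_S : supported on S, with 1 - λ♯²‖Σ^{-1/2}z_{-S}‖₂² - ‖Σ^{1/2}γ⁰_S‖₂² ≫ 0
    (γ0S : ∀ n, Fin (k n) → ℝ)
    (hγ0Ssupp : ∀ n j, j ∉ S n → γ0S n j = 0)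
    (hγ0S : ∃ c > (0 : ℝ), ∀ᶠ n in atTop,
        c ≤ 1 - lam n ^ 2 * (z n ⬝ᵥ ((A n)⁻¹ *ᵥ z n)) - γ0S n ⬝ᵥ (A n *ᵥ γ0S n))
    -- γ⁰_{-S} := λ♯ Σ_{-S,-S}^{-1} z_{-S}, extended by zero on S
    (γ0mS : ∀ n, Fin (k n) → ℝ)
    (hγ0mS0 : ∀ n j, j ∈ S n → γ0mS n j = 0)
    (hγ0mS : ∀ n j, ∀ h : j ∉ S n,
        γ0mS n j = lam n *
          (((((A n).submatrix (Subtype.val : {j : Fin (k n) // j ∉ S n} → Fin (k n))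
              (Subtype.val : {j : Fin (k n) // j ∉ S n} → Fin (k n)))⁻¹ *ᵥ
            (fun l : {j : Fin (k n) // j ∉ S n} => z n l.val)) ⟨j, h⟩)))
    -- γ⁰ := γ⁰_S + γ⁰_{-S} and γ♯ := γ⁰_S
    (γ0 : ∀ n, Fin (k n) → ℝ)
    (hγ0 : ∀ n, γ0 n = fun j => γ0S n j + γ0mS n j)
    -- λ♯ √s → 0
    (hconv : Tendsto (fun n => lam n * Real.sqrt ((S n).card)) atTop (nhds 0)) :
    -- (γ♯, λ♯) is an eligible pair relative to γ⁰
    (∀ n j, |(A n *ᵥ (fun l => γ0S n l - γ0 n l)) j| ≤ lam n) ∧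
    Tendsto (fun n => lam n * ∑ j, |γ0S n j|) atTop (nhds 0) ∧
    -- γ⁰ is allowed for all sufficiently large n
    ((∃ c > (0 : ℝ), ∀ᶠ n in atTop, ∀ u : Fin (k n + 1) → ℝ,
        c * ∑ i, u i ^ 2 ≤ u ⬝ᵥ (bordered (A n) (γ0 n) *ᵥ u)) ∧
      (∀ᶠ n in atTop, ∀ j, |(A n *ᵥ γ0 n) j| ≤ 1)) ∧
    -- λ♯ ‖γ⁰‖₁ does not tend to 0
    ¬ Tendsto (fun n => lam n * ∑ j, |γ0 n j|) atTop (nhds 0) ∧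
    -- ‖Σ_{-1,-1}^{1/2}(γ⁰ - γ♯)‖₂² ≫ 0
    (∃ c > (0 : ℝ), ∀ᶠ n in atTop,
        c ≤ (fun l => γ0 n l - γ0S n l) ⬝ᵥ (A n *ᵥ (fun l => γ0 n l - γ0S n l))) := by
    classical
  obtain ⟨c₁, hc₁, E1⟩ := hz1
  obtain ⟨c₂, hc₂, E2⟩ := hz2
  obtain ⟨c₃, hc₃, E3⟩ := hγ0S
  have hcore := fun n => core (hpos n) (S n) (lam n) (z n) (γ0mS n) (hγ0mS0 n) (hγ0mS n)
  -- the vector r (supported on S) with  A γ⁰_{-S} = λ (z + r)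
  set r : ∀ n, Fin (k n) → ℝ := fun n j =>
    if h : j ∈ S n then
      (((A n).submatrix (Subtype.val : {j : Fin (k n) // j ∈ S n} → Fin (k n))
          (Subtype.val : {j : Fin (k n) // j ∉ S n} → Fin (k n))) *ᵥ
        ((((A n).submatrix (Subtype.val : {j : Fin (k n) // j ∉ S n} → Fin (k n))
            (Subtype.val : {j : Fin (k n) // j ∉ S n} → Fin (k n)))⁻¹) *ᵥ
          (fun l : {j : Fin (k n) // j ∉ S n} => z n l.val))) ⟨j, h⟩
    else 0 with hrdef
  have hr0 : ∀ n j, j ∉ S n → r n j = 0 := fun n j h => dif_neg h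
  have hr1 : ∀ n j, |r n j| ≤ 1 := by
    intro n j
    by_cases h : j ∈ S n
    · show |dite _ _ _| ≤ 1
      rw [dif_pos h]
      exact hric n ⟨j, h⟩
    · rw [hr0 n j h]; simp
  have hAw : ∀ n, (A n) *ᵥ (γ0mS n) = fun j => lam n * (z n j + r n j) := by
    intro n; funext j
    by_cases h : j ∈ S n
    · rw [(hcore n).2 j h, hzsupp n j h]
      show _ = lam n * (0 + dite _ _ _)
      rw [dif_pos h, zero_add]
    · rw [(hcore n).1 j h]
      show _ = lam n * (z n j + dite _ _ _)
      rw [dif_neg h, add_zero]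
  -- basic facts
  have hqlow : ∀ n (x : Fin (k n) → ℝ), c₀ * (x ⬝ᵥ x) ≤ x ⬝ᵥ (A n *ᵥ x) :=
    fun n x => quad_lower (hpos n).1 (heig n) x
  have hPSD : ∀ n, (A n).PosSemidef := fun n => (hpos n).posSemidef
  have hinvPSD : ∀ n, ((A n)⁻¹).PosSemidef := fun n => (hpos n).inv.posSemidef
  have hinvsymm : ∀ n, ((A n)⁻¹).IsSymm := by
    intro n
    have h := (hpos n).inv.1
    rw [Matrix.IsSymm, ← Matrix.conjTranspose_eq_transpose_of_trivial]
    exact h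
  have hα0 : ∀ n, 0 ≤ z n ⬝ᵥ ((A n)⁻¹ *ᵥ z n) := fun n => quad_nonneg (hinvPSD n) (z n)
  have hQS0 : ∀ n, 0 ≤ γ0S n ⬝ᵥ (A n *ᵥ γ0S n) := fun n => quad_nonneg (hPSD n) (γ0S n)
  have hL10 : ∀ n, 0 ≤ ∑ j, |γ0S n j| :=
    fun n => Finset.sum_nonneg fun j _ => abs_nonneg _
  have heq1 : ∀ n, (fun l => γ0 n l - γ0S n l) = γ0mS n := by
    intro n; funext l; rw [hγ0 n]; ring
  have heqsum : ∀ n, γ0 n = γ0S n + γ0mS n := by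
    intro n; funext l; rw [hγ0 n]; rfl
  -- Bullet 1 : eligibility sup-norm bound
  have bullet1 : ∀ n j, |(A n *ᵥ (fun l => γ0S n l - γ0 n l)) j| ≤ lam n := by
    intro n j
    have hneg : (fun l => γ0S n l - γ0 n l) = -(γ0mS n) := by
      funext l; rw [hγ0 n]; show _ = -(γ0mS n l); ring
    rw [hneg, Matrix.mulVec_neg, Pi.neg_apply, abs_neg, hAw n]
    show |lam n * (z n j + r n j)| ≤ lam n
    rw [abs_mul, abs_of_pos (hlam n)]
    have : |z n j + r n j| ≤ 1 := by
      by_cases h : j ∈ S n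
      · rw [hzsupp n j h, zero_add]; exact hr1 n j
      · rw [hr0 n j h, add_zero]; exact hz n j
    nlinarith [this, (hlam n).le]
  -- identity : γ⁰_{-S} = λ A⁻¹ (z + r)
  have hIw : ∀ n, γ0mS n = lam n • ((A n)⁻¹ *ᵥ (fun j => z n j + r n j)) := by
    intro n
    have h1 : (A n)⁻¹ *ᵥ (A n *ᵥ γ0mS n) = γ0mS n := by
      rw [Matrix.mulVec_mulVec, Matrix.nonsing_inv_mul _ (hpos n).det_pos.ne'.isUnit,
        Matrix.one_mulVec]
    rw [← h1, hAw n]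
    have h2 : (fun j => lam n * (z n j + r n j)) = lam n • (fun j => z n j + r n j) := rfl
    rw [h2, Matrix.mulVec_smul]
  -- Qw = λ (w ⬝ z)
  have hQw1 : ∀ n, γ0mS n ⬝ᵥ (A n *ᵥ γ0mS n) = lam n * (γ0mS n ⬝ᵥ z n) := by
    intro n
    rw [hAw n]
    show ∑ j, γ0mS n j * (lam n * (z n j + r n j)) = lam n * ∑ j, γ0mS n j * z n j
    rw [Finset.mul_sum]
    refine Finset.sum_congr rfl fun j _ => ?_
    have : γ0mS n j * r n j = 0 := by
      by_cases h : j ∈ S n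
      · rw [hγ0mS0 n j h, zero_mul]
      · rw [hr0 n j h, mul_zero]
    linear_combination lam n * this
  -- w ⬝ z = λ (α + ρ)
  have hwz : ∀ n, γ0mS n ⬝ᵥ z n =
      lam n * (z n ⬝ᵥ ((A n)⁻¹ *ᵥ z n) + z n ⬝ᵥ ((A n)⁻¹ *ᵥ r n)) := by
    intro n
    rw [hIw n, smul_dotProduct]
    congr 1
    rw [dotProduct_comm]
    have : (fun j => z n j + r n j) = z n + r n := rfl
    rw [this, Matrix.mulVec_add, dotProduct_add]
  have hQweq : ∀ n, γ0mS n ⬝ᵥ (A n *ᵥ γ0mS n) =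
      lam n ^ 2 * (z n ⬝ᵥ ((A n)⁻¹ *ᵥ z n)) + lam n ^ 2 * (z n ⬝ᵥ ((A n)⁻¹ *ᵥ r n)) := by
    intro n
    rw [hQw1 n, hwz n]
    ring
  -- ρ² ≤ α s / c₀
  have hrr : ∀ n, r n ⬝ᵥ r n ≤ ((S n).card : ℝ) := by
    intro n
    have h1 : r n ⬝ᵥ r n = ∑ j ∈ S n, r n j * r n j := by
      rw [dotProduct]
      refine (Finset.sum_subset (Finset.subset_univ (S n)) fun x _ hx => ?_).symm
      rw [hr0 n x hx, mul_zero]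
    have h2 : ((S n).card : ℝ) = ∑ _j ∈ S n, (1 : ℝ) := by simp
    rw [h1, h2]
    refine Finset.sum_le_sum fun j _ => ?_
    have := hr1 n j
    nlinarith [this, abs_nonneg (r n j), sq_abs (r n j)]
  have hρbound2 : ∀ n, (z n ⬝ᵥ ((A n)⁻¹ *ᵥ r n)) ^ 2 ≤
      (z n ⬝ᵥ ((A n)⁻¹ *ᵥ z n)) * (((S n).card : ℝ) / c₀) := by
    intro n
    have hcs := quad_cs (hinvPSD n) (hinvsymm n) (z n) (r n)
    have hup : r n ⬝ᵥ ((A n)⁻¹ *ᵥ r n) ≤ ((S n).card : ℝ) / c₀ :=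
      le_trans (quad_inv_upper (hpos n) hc₀ (hqlow n) (r n)) (by gcongr; exact hrr n)
    calc (z n ⬝ᵥ ((A n)⁻¹ *ᵥ r n)) ^ 2
        ≤ (z n ⬝ᵥ ((A n)⁻¹ *ᵥ z n)) * (r n ⬝ᵥ ((A n)⁻¹ *ᵥ r n)) := hcs
      _ ≤ (z n ⬝ᵥ ((A n)⁻¹ *ᵥ z n)) * (((S n).card : ℝ) / c₀) :=
          mul_le_mul_of_nonneg_left hup (hα0 n)
  -- cross term X = λ (γ0S ⬝ r)
  have hXeq : ∀ n, γ0S n ⬝ᵥ (A n *ᵥ γ0mS n) = lam n * (γ0S n ⬝ᵥ r n) := by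
    intro n
    rw [hAw n]
    show ∑ j, γ0S n j * (lam n * (z n j + r n j)) = lam n * ∑ j, γ0S n j * r n j
    rw [Finset.mul_sum]
    refine Finset.sum_congr rfl fun j _ => ?_
    have : γ0S n j * z n j = 0 := by
      by_cases h : j ∈ S n
      · rw [hzsupp n j h, mul_zero]
      · rw [hγ0Ssupp n j h, zero_mul]
    linear_combination lam n * this
  have hXb : ∀ n, |γ0S n ⬝ᵥ r n| ≤ ∑ j, |γ0S n j| := by
    intro n
    refine le_trans (Finset.abs_sum_le_sum_abs _ _) (Finset.sum_le_sum fun j _ => ?_)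
    rw [abs_mul]
    exact mul_le_of_le_one_right (abs_nonneg _) (hr1 n j)
  -- ℓ¹ bound  L1² ≤ s · QS / c₀
  have hγγ : ∀ n, γ0S n ⬝ᵥ γ0S n ≤ (γ0S n ⬝ᵥ (A n *ᵥ γ0S n)) / c₀ := by
    intro n
    rw [le_div_iff₀ hc₀]
    have := hqlow n (γ0S n)
    linarith
  have hL1sq : ∀ n, (∑ j, |γ0S n j|) ^ 2 ≤
      ((S n).card : ℝ) * ((γ0S n ⬝ᵥ (A n *ᵥ γ0S n)) / c₀) := by
    intro n
    have h0 : ∀ j, |γ0S n j| = (if j ∈ S n then (1:ℝ) else 0) * |γ0S n j| := by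
      intro j
      by_cases h : j ∈ S n
      · rw [if_pos h, one_mul]
      · rw [if_neg h, hγ0Ssupp n j h]; simp
    have hcs := Finset.sum_mul_sq_le_sq_mul_sq Finset.univ
      (fun j => if j ∈ S n then (1:ℝ) else 0) (fun j => |γ0S n j|)
    have hL : ∑ j, (if j ∈ S n then (1:ℝ) else 0) * |γ0S n j| = ∑ j, |γ0S n j| :=
      Finset.sum_congr rfl fun j _ => (h0 j).symm
    have hone : ∑ j, (if j ∈ S n then (1:ℝ) else 0) ^ 2 = ((S n).card : ℝ) := by
      have : ∀ j, (if j ∈ S n then (1:ℝ) else 0) ^ 2 = (if j ∈ S n then (1:ℝ) else 0) := by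
        intro j; by_cases h : j ∈ S n <;> simp [h]
      rw [Finset.sum_congr rfl fun j _ => this j]
      rw [Finset.sum_ite_mem, Finset.univ_inter]
      simp
    have habs : ∑ j, |γ0S n j| ^ 2 = γ0S n ⬝ᵥ γ0S n := by
      simp [dotProduct, pow_two, abs_mul_abs_self]
    rw [hL, hone, habs] at hcs
    calc (∑ j, |γ0S n j|) ^ 2 ≤ ((S n).card : ℝ) * (γ0S n ⬝ᵥ γ0S n) := hcs
      _ ≤ ((S n).card : ℝ) * ((γ0S n ⬝ᵥ (A n *ᵥ γ0S n)) / c₀) :=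
          mul_le_mul_of_nonneg_left (hγγ n) (Nat.cast_nonneg _)
  -- decomposition of the full quadratic form
  have hG : ∀ n, γ0 n ⬝ᵥ (A n *ᵥ γ0 n) =
      γ0S n ⬝ᵥ (A n *ᵥ γ0S n) + 2 * (γ0S n ⬝ᵥ (A n *ᵥ γ0mS n))
        + γ0mS n ⬝ᵥ (A n *ᵥ γ0mS n) := by
    intro n
    rw [heqsum n, Matrix.mulVec_add, dotProduct_add, add_dotProduct,
      add_dotProduct, dot_symm (hsymm n) (γ0mS n) (γ0S n)]
    ring
  -- lower bound for λ‖γ⁰‖₁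
  have hlow1 : ∀ n, γ0mS n ⬝ᵥ (A n *ᵥ γ0mS n) - lam n * ∑ j, |γ0S n j|
      ≤ lam n * ∑ j, |γ0 n j| := by
    intro n
    have h1 : γ0mS n ⬝ᵥ z n ≤ ∑ j, |γ0mS n j| := by
      refine le_trans (Finset.sum_le_sum fun j _ => ?_) le_rfl
      calc γ0mS n j * z n j ≤ |γ0mS n j * z n j| := le_abs_self _
        _ = |γ0mS n j| * |z n j| := abs_mul _ _
        _ ≤ |γ0mS n j| := mul_le_of_le_one_right (abs_nonneg _) (hz n j)
    have h2 : ∑ j, |γ0mS n j| - ∑ j, |γ0S n j| ≤ ∑ j, |γ0 n j| := by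
      rw [← Finset.sum_sub_distrib]
      refine Finset.sum_le_sum fun j _ => ?_
      rw [hγ0 n]
      have := abs_add_le (γ0S n j + γ0mS n j) (-(γ0S n j))
      have he : γ0S n j + γ0mS n j + -(γ0S n j) = γ0mS n j := by ring
      rw [he, abs_neg] at this
      show |γ0mS n j| - |γ0S n j| ≤ |γ0S n j + γ0mS n j|
      linarith
    have h3 : γ0mS n ⬝ᵥ (A n *ᵥ γ0mS n) ≤ lam n * ∑ j, |γ0mS n j| := by
      rw [hQw1 n]
      exact mul_le_mul_of_nonneg_left h1 (hlam n).le
    have h4 := mul_le_mul_of_nonneg_left h2 (hlam n).le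
    rw [mul_sub] at h4
    linarith
  -- abs-from-squares helper
  have habs2 : ∀ a b : ℝ, 0 ≤ b → a ^ 2 ≤ b ^ 2 → |a| ≤ b := by
    intro a b hb h
    rw [← Real.sqrt_sq_eq_abs]
    calc Real.sqrt (a ^ 2) ≤ Real.sqrt (b ^ 2) := Real.sqrt_le_sqrt h
      _ = b := Real.sqrt_sq hb
  set D : ℝ := Real.sqrt c₀ with hDdef
  have hD : 0 < D := Real.sqrt_pos.mpr hc₀
  have hDsq : D ^ 2 = c₀ := Real.sq_sqrt hc₀.le
  have ht0 : ∀ n, 0 ≤ lam n * Real.sqrt ((S n).card) :=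
    fun n => mul_nonneg (hlam n).le (Real.sqrt_nonneg _)
  have he1 : ∀ n, ((lam n * Real.sqrt ((S n).card)) / D) ^ 2
      = lam n ^ 2 * (((S n).card : ℝ)) / c₀ := by
    intro n
    rw [div_pow, mul_pow, Real.sq_sqrt (Nat.cast_nonneg _), hDsq]
  -- |λ² ρ| ≤ t / √c₀  eventually
  have hρ' : ∀ᶠ n in atTop, |lam n ^ 2 * (z n ⬝ᵥ ((A n)⁻¹ *ᵥ r n))|
      ≤ (lam n * Real.sqrt ((S n).card)) / D := by
    filter_upwards [E1] with n h1
    have hα1 : lam n ^ 2 * (z n ⬝ᵥ ((A n)⁻¹ *ᵥ z n)) ≤ 1 := by linarith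
    refine habs2 _ _ (div_nonneg (ht0 n) hD.le) ?_
    rw [he1 n, le_div_iff₀ hc₀]
    have h1' : (z n ⬝ᵥ ((A n)⁻¹ *ᵥ r n)) ^ 2 * c₀
        ≤ (z n ⬝ᵥ ((A n)⁻¹ *ᵥ z n)) * ((S n).card : ℝ) := by
      have e0 : (z n ⬝ᵥ ((A n)⁻¹ *ᵥ z n)) * (((S n).card : ℝ) / c₀) * c₀
          = (z n ⬝ᵥ ((A n)⁻¹ *ᵥ z n)) * ((S n).card : ℝ) := by
        field_simp
      calc (z n ⬝ᵥ ((A n)⁻¹ *ᵥ r n)) ^ 2 * c₀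
          ≤ (z n ⬝ᵥ ((A n)⁻¹ *ᵥ z n)) * (((S n).card : ℝ) / c₀) * c₀ :=
            mul_le_mul_of_nonneg_right (hρbound2 n) hc₀.le
        _ = _ := e0
    have P1 := mul_le_mul_of_nonneg_left h1'
      (show (0:ℝ) ≤ lam n ^ 4 by positivity)
    have P2 : 0 ≤ (lam n ^ 2 * ((S n).card : ℝ))
        * (1 - lam n ^ 2 * (z n ⬝ᵥ ((A n)⁻¹ *ᵥ z n))) :=
      mul_nonneg (by positivity) (by linarith)
    nlinarith [P1, P2]
  -- λ L1 ≤ t / √c₀  eventually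
  have hL1b : ∀ᶠ n in atTop, lam n * ∑ j, |γ0S n j|
      ≤ (lam n * Real.sqrt ((S n).card)) / D := by
    filter_upwards [E3] with n h3
    have hQS1 : γ0S n ⬝ᵥ (A n *ᵥ γ0S n) ≤ 1 := by
      have hh := mul_nonneg (sq_nonneg (lam n)) (hα0 n)
      linarith
    set L : ℝ := ∑ j, |γ0S n j| with hLdef
    have habsL : |lam n * L| ≤ (lam n * Real.sqrt ((S n).card)) / D := by
      refine habs2 _ _ (div_nonneg (ht0 n) hD.le) ?_
      rw [he1 n, le_div_iff₀ hc₀]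
      have h1' : L ^ 2 * c₀
          ≤ ((S n).card : ℝ) * (γ0S n ⬝ᵥ (A n *ᵥ γ0S n)) := by
        have e0 : ((S n).card : ℝ) * ((γ0S n ⬝ᵥ (A n *ᵥ γ0S n)) / c₀) * c₀
            = ((S n).card : ℝ) * (γ0S n ⬝ᵥ (A n *ᵥ γ0S n)) := by
          field_simp
        calc L ^ 2 * c₀
            ≤ ((S n).card : ℝ) * ((γ0S n ⬝ᵥ (A n *ᵥ γ0S n)) / c₀) * c₀ :=
              mul_le_mul_of_nonneg_right (hL1sq n) hc₀.le
          _ = _ := e0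
      have P1 := mul_le_mul_of_nonneg_left h1'
        (show (0:ℝ) ≤ lam n ^ 2 by positivity)
      have P2 : 0 ≤ (lam n ^ 2 * ((S n).card : ℝ))
          * (1 - γ0S n ⬝ᵥ (A n *ᵥ γ0S n)) :=
        mul_nonneg (by positivity) (by linarith)
      nlinarith [P1, P2]
    calc lam n * L ≤ |lam n * L| := le_abs_self _
      _ ≤ (lam n * Real.sqrt ((S n).card)) / D := habsL
  -- Bullet 2 : λ ‖γ♯‖₁ → 0
  have bullet2 : Tendsto (fun n => lam n * ∑ j, |γ0S n j|) atTop (nhds 0) := by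
    have htend : Tendsto (fun n => (lam n * Real.sqrt ((S n).card)) / D) atTop (nhds 0) := by
      simpa using hconv.div_const D
    exact squeeze_zero' (Eventually.of_forall fun n => mul_nonneg (hlam n).le (hL10 n))
      hL1b htend
  -- |X| ≤ t / √c₀  eventually
  have hXb' : ∀ᶠ n in atTop, |γ0S n ⬝ᵥ (A n *ᵥ γ0mS n)|
      ≤ (lam n * Real.sqrt ((S n).card)) / D := by
    filter_upwards [hL1b] with n hb
    rw [hXeq n, abs_mul, abs_of_pos (hlam n)]
    exact le_trans (mul_le_mul_of_nonneg_left (hXb n) (hlam n).le) hb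
  -- main eventual bounds
  set δ : ℝ := (min c₂ c₃) * D / 6 with hδdef
  have hδpos : 0 < δ := by
    have : 0 < min c₂ c₃ := lt_min hc₂ hc₃
    positivity
  have htδ : ∀ᶠ n in atTop, lam n * Real.sqrt ((S n).card) < δ :=
    hconv.eventually (gt_mem_nhds hδpos)
  have hδdiv : δ / D = min c₂ c₃ / 6 := by
    rw [hδdef]
    field_simp
  have EVmain : ∀ᶠ n in atTop,
      (c₂ / 2 ≤ γ0mS n ⬝ᵥ (A n *ᵥ γ0mS n)) ∧
      (γ0 n ⬝ᵥ (A n *ᵥ γ0 n) ≤ 1 - c₃ / 2) := by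
    filter_upwards [E2, E3, hρ', hXb', htδ] with n h2 h3 hρn hXn htn
    have hbd : (lam n * Real.sqrt ((S n).card)) / D ≤ min c₂ c₃ / 6 := by
      rw [← hδdiv]
      gcongr

    have hb2 : (lam n * Real.sqrt ((S n).card)) / D ≤ c₂ / 6 :=
      le_trans hbd (by gcongr; exact min_le_left _ _)
    have hb3 : (lam n * Real.sqrt ((S n).card)) / D ≤ c₃ / 6 :=
      le_trans hbd (by gcongr; exact min_le_right _ _)
    have hρlo := (abs_le.mp hρn).1
    have hρhi := (abs_le.mp hρn).2
    have hXlo := (abs_le.mp hXn).1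
    have hXhi := (abs_le.mp hXn).2
    constructor
    · rw [hQweq n]
      linarith
    · rw [hG n, hXeq n] at *
      rw [hQweq n]
      linarith [hG n, hQweq n, hXeq n]
  -- Bullet 5 : ‖Σ^{1/2}(γ⁰-γ♯)‖² ≫ 0
  have bullet5 : ∃ c > (0 : ℝ), ∀ᶠ n in atTop,
      c ≤ (fun l => γ0 n l - γ0S n l) ⬝ᵥ (A n *ᵥ (fun l => γ0 n l - γ0S n l)) := by
    refine ⟨c₂ / 2, by positivity, ?_⟩
    filter_upwards [EVmain] with n hn
    rw [heq1 n]
    exact hn.1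
  -- Bullet 4 : λ‖γ⁰‖₁ does not tend to 0
  have bullet4 : ¬ Tendsto (fun n => lam n * ∑ j, |γ0 n j|) atTop (nhds 0) := by
    intro hT
    have hlb : ∀ᶠ n in atTop, c₂ / 3 ≤ lam n * ∑ j, |γ0 n j| := by
      filter_upwards [EVmain, hL1b, htδ] with n hn hLn htn
      have hbd : (lam n * Real.sqrt ((S n).card)) / D ≤ min c₂ c₃ / 6 := by
        rw [← hδdiv]
        gcongr

      have hb2 : (lam n * Real.sqrt ((S n).card)) / D ≤ c₂ / 6 :=
        le_trans hbd (by gcongr; exact min_le_left _ _)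
      have := hlow1 n
      linarith [hn.1]
    have hub := hT.eventually (gt_mem_nhds (show (0:ℝ) < c₂ / 3 by positivity))
    obtain ⟨n, h1, h2⟩ := (hlb.and hub).exists
    linarith
  -- Bullet 3b : ‖Σγ⁰‖∞ ≤ 1 eventually
  have bullet3b : ∀ᶠ n in atTop, ∀ j, |(A n *ᵥ γ0 n) j| ≤ 1 := by
    filter_upwards [EVmain] with n hn
    intro j
    have hG0 : 0 ≤ γ0 n ⬝ᵥ (A n *ᵥ γ0 n) := quad_nonneg (hPSD n) (γ0 n)
    have hG1 : γ0 n ⬝ᵥ (A n *ᵥ γ0 n) ≤ 1 := by linarith [hn.2]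
    have hcs := quad_cs (hPSD n) (hsymm n) (Pi.single j 1) (γ0 n)
    have h1 : Pi.single j (1:ℝ) ⬝ᵥ (A n *ᵥ γ0 n) = (A n *ᵥ γ0 n) j := by
      simp [single_dotProduct]
    have h2 : Pi.single j (1:ℝ) ⬝ᵥ (A n *ᵥ Pi.single j (1:ℝ)) = A n j j := by
      simp [Matrix.mulVec_single, single_dotProduct]
    rw [h1, h2, hdiag n j] at hcs
    refine habs2 _ _ zero_le_one ?_
    nlinarith [hcs]
  -- Bullet 3a : smallest eigenvalue of the bordered matrix is bounded below
  have bullet3a : ∃ c > (0 : ℝ), ∀ᶠ n in atTop, ∀ u : Fin (k n + 1) → ℝ,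
      c * ∑ i, u i ^ 2 ≤ u ⬝ᵥ (bordered (A n) (γ0 n) *ᵥ u) := by
    have hmpos : 0 < min c₀ (c₃ / 2) := lt_min hc₀ (by positivity)
    have hNpos : 0 < 3 * c₀ + 2 := by positivity
    refine ⟨min c₀ (c₃ / 2) * c₀ / (3 * c₀ + 2), by positivity, ?_⟩
    filter_upwards [EVmain] with n hn
    intro u
    rw [bordered_quad (hsymm n) (γ0 n) u]
    set p : Fin (k n) → ℝ := fun i => u i.succ + u 0 * γ0 n i with hpdef
    have hpa : c₀ * (p ⬝ᵥ p) ≤ p ⬝ᵥ (A n *ᵥ p) := hqlow n p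
    have hpp0 : 0 ≤ p ⬝ᵥ p :=
      Finset.sum_nonneg fun i _ => mul_self_nonneg (p i)
    have hgg1 : c₀ * (γ0 n ⬝ᵥ γ0 n) ≤ 1 := by
      have := hqlow n (γ0 n)
      have hG1 : γ0 n ⬝ᵥ (A n *ᵥ γ0 n) ≤ 1 := by linarith [hn.2]
      linarith
    have hGb : γ0 n ⬝ᵥ (A n *ᵥ γ0 n) ≤ 1 - c₃ / 2 := hn.2
    have hsplit : ∑ i : Fin (k n + 1), u i ^ 2
        = u 0 ^ 2 + ∑ i : Fin (k n), u i.succ ^ 2 := Fin.sum_univ_succ _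
    have hpt : ∀ i, u i.succ ^ 2 ≤ 2 * p i ^ 2 + 2 * (u 0) ^ 2 * (γ0 n i) ^ 2 := by
      intro i
      have hpe : p i = u i.succ + u 0 * γ0 n i := rfl
      rw [hpe]
      nlinarith [sq_nonneg (u i.succ + 2 * (u 0 * γ0 n i))]
    have hvsum : ∑ i : Fin (k n), u i.succ ^ 2
        ≤ 2 * (p ⬝ᵥ p) + 2 * (u 0) ^ 2 * (γ0 n ⬝ᵥ γ0 n) := by
      have h1 := Finset.sum_le_sum fun i (_ : i ∈ Finset.univ) => hpt i
      have e1 : ∑ i : Fin (k n), p i ^ 2 = p ⬝ᵥ p := by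
        simp [dotProduct, pow_two]
      have e2 : ∑ i : Fin (k n), (γ0 n i) ^ 2 = γ0 n ⬝ᵥ γ0 n := by
        simp [dotProduct, pow_two]
      have h2 : ∑ i : Fin (k n), (2 * p i ^ 2 + 2 * (u 0) ^ 2 * (γ0 n i) ^ 2)
          = 2 * (p ⬝ᵥ p) + 2 * (u 0) ^ 2 * (γ0 n ⬝ᵥ γ0 n) := by
        rw [Finset.sum_add_distrib, ← Finset.mul_sum, ← Finset.mul_sum, e1, e2]
      linarith [h1, h2.le, h2.ge]
    have key1 : (c₃ / 2) * (u 0) ^ 2 ≤ (u 0) ^ 2 * (1 - γ0 n ⬝ᵥ (A n *ᵥ γ0 n)) := by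
      nlinarith [sq_nonneg (u 0), hGb]
    have key2 : c₀ * ∑ i : Fin (k n + 1), u i ^ 2
        ≤ (3 * c₀ + 2) * ((p ⬝ᵥ p) + (u 0) ^ 2) := by
      have hx : 2 * (u 0) ^ 2 * (c₀ * (γ0 n ⬝ᵥ γ0 n)) ≤ 2 * (u 0) ^ 2 :=
        le_trans (mul_le_mul_of_nonneg_left hgg1 (by positivity)) (by nlinarith [sq_nonneg (u 0)])
      nlinarith [hsplit, mul_le_mul_of_nonneg_left hvsum hc₀.le, hpp0, sq_nonneg (u 0),
        mul_nonneg hc₀.le hpp0, mul_nonneg hc₀.le (sq_nonneg (u 0)), hx,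
        mul_nonneg hc₀.le (mul_nonneg hc₀.le hpp0)]
    have key3' := mul_le_mul_of_nonneg_left key2
      (show (0:ℝ) ≤ min c₀ (c₃ / 2) / (3 * c₀ + 2) by positivity)
    have key3 : min c₀ (c₃ / 2) * c₀ / (3 * c₀ + 2) * (∑ i : Fin (k n + 1), u i ^ 2)
        ≤ min c₀ (c₃ / 2) * ((p ⬝ᵥ p) + (u 0) ^ 2) := by
      have e1 : min c₀ (c₃ / 2) * c₀ / (3 * c₀ + 2) * (∑ i : Fin (k n + 1), u i ^ 2)
          = min c₀ (c₃ / 2) / (3 * c₀ + 2) * (c₀ * ∑ i : Fin (k n + 1), u i ^ 2) := by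
        ring
      have e2 : min c₀ (c₃ / 2) / (3 * c₀ + 2) * ((3 * c₀ + 2) * ((p ⬝ᵥ p) + (u 0) ^ 2))
          = min c₀ (c₃ / 2) * ((p ⬝ᵥ p) + (u 0) ^ 2) := by
        field_simp
      rw [e1, ← e2]
      exact key3' 
    have key5 : min c₀ (c₃ / 2) * ((p ⬝ᵥ p) + (u 0) ^ 2)
        ≤ c₀ * (p ⬝ᵥ p) + (c₃ / 2) * (u 0) ^ 2 := by
      have hm1 : min c₀ (c₃ / 2) ≤ c₀ := min_le_left _ _
      have hm2 : min c₀ (c₃ / 2) ≤ c₃ / 2 := min_le_right _ _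
      nlinarith [hpp0, sq_nonneg (u 0), hm1, hm2]
    linarith [key3, key5, hpa, key1]
  exact ⟨bullet1, bullet2, ⟨bullet3a, bullet3b⟩, bullet4, bullet5⟩
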